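/- Let p > 2 and μ > 1 be real numbers with μ < (1/2)·(p/(p−1))^{p−1}, and define H₁(t) = t²/(p−1) − ((p−2)/p)·(p−1)^{−p/(p−2)}·t^{2(p−1)/(p−2)} for t > 0. If β̃ ≥ (p−1)μ and (2(p−1)/p)·μ ≥ H₁(β̃), then there is no real number τ ∈ (1, +∞) satisfying simultaneously p·τ^{2p−2} − 2β̃·τ^p = μ(2−p) and μ + β̃·τ^p − β̃·τ^{p−2} − τ^{2p−2} = 0. -/

import Mathlib

/-!
Eliminating `β̃` from the two equations gives
`μ (p τ^p - (p-2) τ^(p-2)) = τ^(2p-2) (p τ^(p-2) - (p-2) τ^p)`.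
For `τ > 1` the right-hand side is strictly smaller than `p τ^p - (p-2) τ^(p-2) > 0`, which forces
`μ < 1`. With `s = τ²` that inequality reads `m(s) = (p-2) s^p - p s^(p-1) + p s - (p-2) > 0`,
which holds because `m(1) = 0` and `m'(s) / p = (p-2) s^(p-1) - (p-1) s^(p-2) + 1` is positive for
`s > 1` by Bernoulli's inequality applied to `s^(p-2)` with exponent `(p-1)/(p-2)`.
-/

open Real Set

lemma pos_of_hasDerivAt_pos {f f' : ℝ → ℝ} {a b : ℝ} (hf : ∀ x ≥ a, HasDerivAt f (f' x) x)
    (hf' : ∀ x > a, 0 < f' x) (hfa : f a = 0) (hab : a < b) : 0 < f b := by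
  have hmono : StrictMonoOn f (Ici a) :=
    strictMonoOn_of_hasDerivWithinAt_pos (convex_Ici a)
      (fun x hx => (hf x hx).continuousAt.continuousWithinAt)
      (fun x hx => by
        rw [interior_Ici] at hx ⊢
        exact (hf x (le_of_lt hx)).hasDerivWithinAt)
      (fun x hx => hf' x (by rwa [interior_Ici] at hx))
  simpa [hfa] using hmono self_mem_Ici hab.le hab

lemma rpow_combination_deriv_pos {p x : ℝ} (hp : 2 < p) (hx : 1 < x) :
    0 < (p - 2) * x ^ (p - 1) - (p - 1) * x ^ (p - 2) + 1 := by
  have hy : 1 < x ^ (p - 2) := one_lt_rpow hx (by linarith)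
  have hr : 1 < (p - 1) / (p - 2) := by rw [one_lt_div (by linarith)]; linarith
  have hbern := one_add_mul_self_lt_rpow_one_add (s := x ^ (p - 2) - 1) (by linarith)
    (by linarith) hr
  rw [add_sub_cancel, ← rpow_mul (by linarith), mul_div_cancel₀ _ (by linarith : p - 2 ≠ 0)]
    at hbern
  have := mul_lt_mul_of_pos_left hbern (by linarith : 0 < p - 2)
  rw [mul_add, ← mul_assoc, mul_div_cancel₀ _ (by linarith : p - 2 ≠ 0)] at this
  linarith

lemma rpow_combination_pos {p s : ℝ} (hp : 2 < p) (hs : 1 < s) :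
    0 < (p - 2) * s ^ p - p * s ^ (p - 1) + p * s - (p - 2) := by
  refine pos_of_hasDerivAt_pos (f := fun x => (p - 2) * x ^ p - p * x ^ (p - 1) + p * x - (p - 2))
    (f' := fun x => p * ((p - 2) * x ^ (p - 1) - (p - 1) * x ^ (p - 2) + 1))
    (fun x hx => ?_) (fun x hx => mul_pos (by linarith) (rpow_combination_deriv_pos hp hx))
    (by simp only [one_rpow, mul_one, sub_sub_cancel_left]; ring) hs
  have hx0 : x ≠ 0 := by linarith
  have := ((((hasDerivAt_rpow_const (p := p) (Or.inl hx0)).const_mul (p - 2)).sub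
    ((hasDerivAt_rpow_const (p := p - 1) (Or.inl hx0)).const_mul p)).add
    ((hasDerivAt_id x).const_mul p)).sub_const (p - 2)
  refine this.congr_deriv ?_
  rw [show p - 1 - 1 = p - 2 by ring]
  ring

lemma rpow_combination_mul_lt {p τ : ℝ} (hp : 2 < p) (hτ : 1 < τ) :
    τ ^ (2 * p - 2) * (p * τ ^ (p - 2) - (p - 2) * τ ^ p) < p * τ ^ p - (p - 2) * τ ^ (p - 2) := by
  have hτ0 : 0 < τ := by linarith
  set s := τ ^ (2 : ℝ)
  have hs : 1 < s := one_lt_rpow hτ (by norm_num)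
  have hv : τ ^ p = τ ^ (p - 2) * s := by rw [← rpow_add hτ0]; ring_nf
  have hw : τ ^ (2 * p - 2) = s ^ (p - 1) := by rw [← rpow_mul hτ0.le]; ring_nf
  have hsp : s ^ p = s ^ (p - 1) * s := by
    rw [← rpow_add_one (by positivity)]; ring_nf
  have := mul_pos (rpow_pos_of_pos hτ0 (p - 2)) (rpow_combination_pos hp hs)
  rw [hsp] at this
  rw [hv, hw]
  nlinarith

theorem no_solution_B3_general (p μ β : ℝ) (hp : 2 < p) (hμ : 1 < μ) :
    ¬ ∃ τ : ℝ, 1 < τ ∧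
      p * τ ^ (2 * p - 2) - 2 * β * τ ^ p = μ * (2 - p) ∧
      μ + β * τ ^ p - β * τ ^ (p - 2) - τ ^ (2 * p - 2) = 0 := by
  rintro ⟨τ, hτ, h₁, h₂⟩
  have hμ_eq : μ * (p * τ ^ p - (p - 2) * τ ^ (p - 2)) =
      τ ^ (2 * p - 2) * (p * τ ^ (p - 2) - (p - 2) * τ ^ p) := by
    linear_combination (τ ^ p - τ ^ (p - 2)) * h₁ + 2 * τ ^ p * h₂
  have hD : 0 < p * τ ^ p - (p - 2) * τ ^ (p - 2) := by
    have hlt : τ ^ (p - 2) < τ ^ p := rpow_lt_rpow_of_exponent_lt hτ (by linarith)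
    nlinarith [rpow_pos_of_pos (by linarith : 0 < τ) (p - 2)]
  nlinarith [rpow_combination_mul_lt hp hτ]

/-- Case (B3): for `p > 2`, `1 < μ < (1/2)(p/(p-1))^{p-1}`, `β̃ ≥ (p-1)μ` and
`(2(p-1)/p)μ ≥ H₁(β̃)` where `H₁(t) = t²/(p-1) - ((p-2)/p)(p-1)^{-p/(p-2)} t^{2(p-1)/(p-2)}`,
the system `p·τ^{2p-2} - 2β̃·τ^p = μ(2-p)`, `μ + β̃·τ^p - β̃·τ^{p-2} - τ^{2p-2} = 0`
has no solution `τ ∈ (1, +∞)`. -/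
theorem no_solution_B3 (p μ β : ℝ) (hp : 2 < p) (hμ : 1 < μ)
    (hμ' : μ < (1 / 2) * (p / (p - 1)) ^ (p - 1)) (hβ : (p - 1) * μ ≤ β)
    (H₁ : ℝ → ℝ)
    (hH₁ : ∀ t > 0, H₁ t = t ^ 2 / (p - 1) -
      ((p - 2) / p) * (p - 1) ^ (-(p / (p - 2))) * t ^ (2 * (p - 1) / (p - 2)))
    (hcond : (2 * (p - 1) / p) * μ ≥ H₁ β) :
    ¬ ∃ τ : ℝ, 1 < τ ∧
      p * τ ^ (2 * p - 2) - 2 * β * τ ^ p = μ * (2 - p) ∧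
      μ + β * τ ^ p - β * τ ^ (p - 2) - τ ^ (2 * p - 2) = 0 :=
  no_solution_B3_general p μ β hp hμ
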